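/- arXiv:2603.26565 — 2 statements merged into one kernel-verified Lean document; each statement's English description precedes it below -/
import Mathlib

section
/- Let s ∈ (0,1). For every f ∈ L²([0,1]) one has the Haar expansion T^s f = (2^s − 1)^{-1} ( Σ_{I∈𝒟} |I|^s (f,h_I) h_I + 2^s ⟨f⟩_{[0,1]} 𝟙_{[0,1]} ) (as elements of L²([0,1])). -/
open MeasureTheory Filter
open scoped ENNReal NNReal

noncomputable section

/-- A dyadic subinterval of `[0,1]`: the interval `[k/2^j, (k+1)/2^j)`. -/
structure DI where
  j : ℕ
  k : ℕ
  hk : k < 2 ^ j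

namespace DI

/-- The underlying set of a dyadic interval. -/
def set (p : DI) : Set ℝ := Set.Ico ((p.k : ℝ) / 2 ^ p.j) (((p.k : ℝ) + 1) / 2 ^ p.j)

/-- The length `|I|` of a dyadic interval. -/
def len (p : DI) : ℝ := 1 / 2 ^ p.j

/-- The left child `I₋`. -/
def left (p : DI) : DI := ⟨p.j + 1, 2 * p.k, by have := p.hk; rw [pow_succ]; omega⟩

/-- The right child `I₊`. -/
def right (p : DI) : DI := ⟨p.j + 1, 2 * p.k + 1, by have := p.hk; rw [pow_succ]; omega⟩

/-- The root interval `[0,1)`. -/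
def root : DI := ⟨0, 0, by norm_num⟩

end DI

/-- The unit interval `[0,1]`. -/
def I01 : Set ℝ := Set.Icc 0 1

/-- The inner product `(f,g) = ∫₀¹ f g`. -/
def inn (f g : ℝ → ℝ) : ℝ := ∫ x in I01, f x * g x

/-- The average `⟨f⟩_I = |I|⁻¹ ∫_I f`. -/
def avg (f : ℝ → ℝ) (p : DI) : ℝ := (1 / p.len) * ∫ x in p.set, f x

/-- The Haar function `h_I = |I|^{-1/2} (𝟙_{I₋} - 𝟙_{I₊})`. -/
def haar (p : DI) : ℝ → ℝ := fun x =>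
  (Real.sqrt p.len)⁻¹ *
    (Set.indicator p.left.set (1 : ℝ → ℝ) x - Set.indicator p.right.set (1 : ℝ → ℝ) x)

/-- Membership in `L²([0,1])`. -/
def MemL2 (f : ℝ → ℝ) : Prop := MemLp f 2 (volume.restrict I01)

/-- The squared homogeneous seminorm `‖f‖_{Ḣ^s}² = Σ_I |I|^{-2s} (f,h_I)²`
(which equals `‖D^s f‖_{L²}²` by orthonormality of the Haar system). -/
def hdotSq (s : ℝ) (f : ℝ → ℝ) : ℝ≥0∞ :=
  ∑' p : DI, ENNReal.ofReal (p.len ^ (-(2 * s)) * (inn f (haar p)) ^ 2)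

/-- The squared Sobolev norm `‖f‖_{H^s}² = ‖D^s f‖_{L²}² + ‖f‖_{L²}²`. -/
def hsNormSq (s : ℝ) (f : ℝ → ℝ) : ℝ≥0∞ :=
  hdotSq s f + ENNReal.ofReal (∫ x in I01, (f x) ^ 2)

/-- The Sobolev norm `‖f‖_{H^s}`. -/
def hsNorm (s : ℝ) (f : ℝ → ℝ) : ℝ≥0∞ := hsNormSq s f ^ (1 / 2 : ℝ)

/-- The homogeneous seminorm `‖f‖_{Ḣ^s}`. -/
def hdotNorm (s : ℝ) (f : ℝ → ℝ) : ℝ≥0∞ := hdotSq s f ^ (1 / 2 : ℝ)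

/-- Membership in the local dyadic fractional Sobolev space `H^s`. -/
def MemHs (s : ℝ) (f : ℝ → ℝ) : Prop := MemL2 f ∧ hsNormSq s f < ⊤

/-- The dyadic Sobolev `s`-capacity `Cap_s(E)`; equals `∞` if no admissible function exists. -/
def capa (s : ℝ) (E : Set ℝ) : ℝ≥0∞ :=
  ⨅ (f : ℝ → ℝ) (_ : MemHs s f) (_ : ∀ᵐ x ∂(volume.restrict E), 1 ≤ f x), hsNormSq s f

/-- The squared `BMO^s` norm: supremum over finite pairwise disjoint families of dyadic
intervals of `Cap_s(⋃ I_k)⁻¹ Σ_k Σ_{J ⊆ I_k} |J|^{-2s} (b,h_J)²`. -/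
def bmoSq (s : ℝ) (b : ℝ → ℝ) : ℝ≥0∞ :=
  ⨆ (F : Finset DI) (_ : (F : Set DI).Pairwise fun p q => Disjoint p.set q.set),
    (∑ p ∈ F, ∑' J : {J : DI // J.set ⊆ p.set},
        ENNReal.ofReal ((J : DI).len ^ (-(2 * s)) * (inn b (haar J)) ^ 2)) /
      capa s (⋃ p ∈ F, p.set)

/-- The `BMO^s` norm. -/
def bmoNorm (s : ℝ) (b : ℝ → ℝ) : ℝ≥0∞ := bmoSq s b ^ (1 / 2 : ℝ)

/-- `b ∈ BMO^s`. -/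
def MemBMOs (s : ℝ) (b : ℝ → ℝ) : Prop := bmoSq s b ≠ ⊤

/-- The truncated (small scales `|J| < 2^{-N}`) `BMO^s`-type quantity appearing in the
definition of `CMO^s`. -/
def cmoTrunc (s : ℝ) (b : ℝ → ℝ) (N : ℕ) : ℝ≥0∞ :=
  ⨆ (F : Finset DI) (_ : (F : Set DI).Pairwise fun p q => Disjoint p.set q.set),
    (∑ p ∈ F, ∑' J : {J : DI // J.set ⊆ p.set ∧ J.len < 1 / 2 ^ N},
        ENNReal.ofReal ((J : DI).len ^ (-(2 * s)) * (inn b (haar J)) ^ 2)) /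
      capa s (⋃ p ∈ F, p.set)

/-- `b ∈ CMO^s`. -/
def MemCMOs (s : ℝ) (b : ℝ → ℝ) : Prop :=
  bmoSq s b ≠ ⊤ ∧ Tendsto (cmoTrunc s b) atTop (nhds 0)

/-- The dyadic paraproduct `Π_b f = Σ_I (b,h_I) ⟨f⟩_I h_I`. -/
def para (b f : ℝ → ℝ) : ℝ → ℝ := fun x => ∑' p : DI, inn b (haar p) * avg f p * haar p x

/-- The operator `Π̃_b f = Σ_I (f,h_I)(b,h_I)|I|⁻¹ 𝟙_I + ⟨f⟩_{[0,1]} ⟨b⟩_{[0,1]}`. -/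
def paraT (b f : ℝ → ℝ) : ℝ → ℝ := fun x =>
  (∑' p : DI, inn f (haar p) * inn b (haar p) * (1 / p.len) * Set.indicator p.set (1 : ℝ → ℝ) x)
    + avg f DI.root * avg b DI.root

/-- The Haar shift `Ш f = Σ_I (f,h_I)(h_{I₋} - h_{I₊})`. -/
def shaar (f : ℝ → ℝ) : ℝ → ℝ := fun x =>
  ∑' p : DI, inn f (haar p) * (haar p.left x - haar p.right x)

/-- The commutator `[b,Ш]f = b·Шf − Ш(b·f)`. -/
def commSh (b f : ℝ → ℝ) : ℝ → ℝ := fun x =>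
  b x * shaar f x - shaar (fun y => b y * f y) x

/-- The dyadic fractional integral `T^s f = Σ_I |I|^s ⟨f⟩_I 𝟙_I`. -/
def Ts (s : ℝ) (f : ℝ → ℝ) : ℝ → ℝ := fun x =>
  ∑' p : DI, p.len ^ s * avg f p * Set.indicator p.set (1 : ℝ → ℝ) x

/-- The modified dyadic fractional derivative `J^s f = Σ_I |I|^{-s}(f,h_I) h_I + 2^{-s}⟨f⟩_{[0,1]}`. -/
def Js (s : ℝ) (f : ℝ → ℝ) : ℝ → ℝ := fun x =>
  (∑' p : DI, p.len ^ (-s) * inn f (haar p) * haar p x) + (2 : ℝ) ^ (-s) * avg f DI.root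

/-- The dyadic fractional derivative `D^s f = Σ_I |I|^{-s}(f,h_I) h_I`. -/
def Ds (s : ℝ) (f : ℝ → ℝ) : ℝ → ℝ := fun x =>
  ∑' p : DI, p.len ^ (-s) * inn f (haar p) * haar p x

/-- The dyadic maximal operator `M f = sup_I ⟨|f|⟩_I 𝟙_I`. -/
def maxOp (f : ℝ → ℝ) : ℝ → ℝ := fun x =>
  ⨆ p : DI, Set.indicator p.set (fun _ => avg (fun y => |f y|) p) x

/-- Compactness of an operator `T` on `H^s`: every sequence in the unit ball of `H^s`
has a subsequence whose image under `T` converges in the `H^s` norm. -/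
def HsCompact (s : ℝ) (T : (ℝ → ℝ) → ℝ → ℝ) : Prop :=
  ∀ f : ℕ → ℝ → ℝ, (∀ n, MemHs s (f n)) → (∀ n, hsNorm s (f n) ≤ 1) →
    ∃ (φ : ℕ → ℕ) (g : ℝ → ℝ), StrictMono φ ∧ MemHs s g ∧
      Tendsto (fun k => hsNorm s (fun x => T (f (φ k)) x - g x)) atTop (nhds 0)

section Aux

lemma two_pow_pos' (j : ℕ) : (0:ℝ) < 2 ^ j := by positivity

lemma DI.len_pos (p : DI) : 0 < p.len := by
  unfold DI.len; positivity

lemma DI.set_subset_Ico (p : DI) : p.set ⊆ Set.Ico (0:ℝ) 1 := by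
  rintro x ⟨h1, h2⟩
  constructor
  · refine le_trans ?_ h1; positivity
  · refine lt_of_lt_of_le h2 ?_
    rw [div_le_one (two_pow_pos' p.j)]
    have := p.hk
    exact_mod_cast Nat.succ_le_of_lt this

lemma Ico_subset_I01 : Set.Ico (0:ℝ) 1 ⊆ I01 := Set.Ico_subset_Icc_self

lemma DI.measurableSet_set (p : DI) : MeasurableSet p.set := measurableSet_Ico

lemma DI.volume_set (p : DI) : MeasureTheory.volume p.set = ENNReal.ofReal p.len := by
  rw [DI.set, Real.volume_Ico, DI.len]
  congr 1; field_simp; ring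

lemma DI.left_union_right (p : DI) : p.left.set ∪ p.right.set = p.set := by
  have h2 : (0:ℝ) < 2 ^ p.j := two_pow_pos' p.j
  simp only [DI.set, DI.left, DI.right]
  push_cast
  have e1 : 2 * (p.k:ℝ) / 2 ^ (p.j+1) = (p.k:ℝ) / 2 ^ p.j := by
    rw [pow_succ]; field_simp
  have e3 : (2 * (p.k:ℝ) + 1 + 1) / 2 ^ (p.j+1) = ((p.k:ℝ) + 1) / 2 ^ p.j := by
    rw [pow_succ]; field_simp; ring
  rw [e1, e3, Set.Ico_union_Ico_eq_Ico]
  · rw [← e1]; gcongr <;> norm_num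
  · rw [← e3]; gcongr <;> norm_num

lemma DI.left_right_disjoint (p : DI) : Disjoint p.left.set p.right.set := by
  simp only [DI.set, DI.left, DI.right]
  push_cast
  exact Set.Ico_disjoint_Ico_same

lemma DI.left_subset (p : DI) : p.left.set ⊆ p.set := by
  rw [← p.left_union_right]; exact Set.subset_union_left

lemma DI.right_subset (p : DI) : p.right.set ⊆ p.set := by
  rw [← p.left_union_right]; exact Set.subset_union_right

lemma DI.len_left (p : DI) : p.left.len = p.len / 2 := by
  simp [DI.len, DI.left, pow_succ]; ring

lemma DI.len_right (p : DI) : p.right.len = p.len / 2 := by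
  simp [DI.len, DI.right, pow_succ]; ring

/-- the chain of dyadic intervals containing x -/
def ch (x : ℝ) (j : ℕ) : DI := ⟨j, ⌊x * 2 ^ j⌋₊ % 2 ^ j, Nat.mod_lt _ (Nat.pow_pos (by norm_num))⟩

lemma ch_j (x : ℝ) (j : ℕ) : (ch x j).j = j := rfl

lemma floor_lt_pow (x : ℝ) (j : ℕ) (hx : x ∈ Set.Ico (0:ℝ) 1) : ⌊x * 2 ^ j⌋₊ < 2 ^ j := by
  rw [Nat.floor_lt (mul_nonneg hx.1 (le_of_lt (two_pow_pos' j)))]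
  calc x * 2 ^ j < 1 * 2 ^ j := by
        apply mul_lt_mul_of_pos_right hx.2 (two_pow_pos' j)
    _ = ((2:ℝ) ^ j) := by ring
    _ = ((2 ^ j : ℕ) : ℝ) := by push_cast; ring

lemma ch_k (x : ℝ) (j : ℕ) (hx : x ∈ Set.Ico (0:ℝ) 1) : (ch x j).k = ⌊x * 2 ^ j⌋₊ :=
  Nat.mod_eq_of_lt (floor_lt_pow x j hx)

lemma ch_mem (x : ℝ) (j : ℕ) (hx : x ∈ Set.Ico (0:ℝ) 1) : x ∈ (ch x j).set := by
  have h2 := two_pow_pos' j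
  have hnn : (0:ℝ) ≤ x * 2 ^ j := mul_nonneg hx.1 (le_of_lt h2)
  constructor
  · show ((ch x j).k : ℝ) / 2 ^ (ch x j).j ≤ x
    rw [ch_k x j hx, ch_j, div_le_iff₀ h2]
    exact Nat.floor_le hnn
  · show x < (((ch x j).k : ℝ) + 1) / 2 ^ (ch x j).j
    rw [ch_k x j hx, ch_j, lt_div_iff₀ h2]
    exact Nat.lt_floor_add_one _

lemma eq_ch_of_mem {x : ℝ} {p : DI} (hx : x ∈ Set.Ico (0:ℝ) 1) (hxp : x ∈ p.set) :
    p = ch x p.j := by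
  obtain ⟨j, k, hk⟩ := p
  obtain ⟨h1, h2⟩ := hxp
  simp only [DI.set] at h1 h2
  have h2p := two_pow_pos' j
  have hfl : ⌊x * 2 ^ j⌋₊ = k := by
    rw [Nat.floor_eq_iff (mul_nonneg hx.1 (le_of_lt h2p))]
    constructor
    · rw [div_le_iff₀ h2p] at h1; exact_mod_cast h1
    · rw [lt_div_iff₀ h2p] at h2; exact_mod_cast h2
  simp only [ch, DI.mk.injEq]
  refine ⟨trivial, ?_⟩
  rw [hfl, Nat.mod_eq_of_lt hk]

lemma ch_injective (x : ℝ) : Function.Injective (ch x) := by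
  intro a b h
  have : (ch x a).j = (ch x b).j := by rw [h]
  simpa [ch_j] using this

lemma ch_zero (x : ℝ) : ch x 0 = DI.root := by
  simp [ch, DI.root, DI.mk.injEq, Nat.mod_one]

end Aux
section Aux2
open MeasureTheory

lemma f_mul_haar (f : ℝ → ℝ) (p : DI) (x : ℝ) :
    f x * haar p x = (Real.sqrt p.len)⁻¹ *
      (Set.indicator p.left.set f x - Set.indicator p.right.set f x) := by
  by_cases hL : x ∈ p.left.set <;> by_cases hR : x ∈ p.right.set <;>
    simp [haar, hL, hR, Set.indicator_of_mem, Set.indicator_of_notMem] <;> ring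

lemma integral_indicator_sub (f : ℝ → ℝ) (hf : IntegrableOn f I01) {L : Set ℝ}
    (hLm : MeasurableSet L) (hL : L ⊆ I01) :
    (∫ x in I01, Set.indicator L f x) = ∫ x in L, f x := by
  rw [MeasureTheory.integral_indicator hLm, Measure.restrict_restrict hLm,
    Set.inter_eq_self_of_subset_left hL]

lemma inn_haar (f : ℝ → ℝ) (hf : IntegrableOn f I01) (p : DI) :
    inn f (haar p) = (Real.sqrt p.len)⁻¹ *
      ((∫ x in p.left.set, f x) - ∫ x in p.right.set, f x) := by
  have hLs : p.left.set ⊆ I01 := (p.left_subset.trans p.set_subset_Ico).trans Ico_subset_I01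
  have hRs : p.right.set ⊆ I01 := (p.right_subset.trans p.set_subset_Ico).trans Ico_subset_I01
  have hiL : Integrable (Set.indicator p.left.set f) (volume.restrict I01) :=
    ((hf.mono_set hLs).integrable_indicator p.left.measurableSet_set).restrict
  have hiR : Integrable (Set.indicator p.right.set f) (volume.restrict I01) :=
    ((hf.mono_set hRs).integrable_indicator p.right.measurableSet_set).restrict
  unfold inn
  have : ∀ x, f x * haar p x = (Real.sqrt p.len)⁻¹ *
      (Set.indicator p.left.set f x - Set.indicator p.right.set f x) := f_mul_haar f p
  rw [integral_congr_ae (Filter.Eventually.of_forall this), integral_const_mul,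
    integral_sub hiL hiR, integral_indicator_sub f hf p.left.measurableSet_set hLs,
    integral_indicator_sub f hf p.right.measurableSet_set hRs]

lemma integral_split (f : ℝ → ℝ) (hf : IntegrableOn f I01) (p : DI) :
    (∫ x in p.set, f x) = (∫ x in p.left.set, f x) + ∫ x in p.right.set, f x := by
  have hLs : p.left.set ⊆ I01 := (p.left_subset.trans p.set_subset_Ico).trans Ico_subset_I01
  have hRs : p.right.set ⊆ I01 := (p.right_subset.trans p.set_subset_Ico).trans Ico_subset_I01
  rw [← p.left_union_right,
    MeasureTheory.setIntegral_union p.left_right_disjoint p.right.measurableSet_set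
      (hf.mono_set hLs) (hf.mono_set hRs)]

lemma haar_val_left (p : DI) {x : ℝ} (hx : x ∈ p.left.set) :
    haar p x = (Real.sqrt p.len)⁻¹ := by
  have hR : x ∉ p.right.set := fun h => (p.left_right_disjoint.ne_of_mem hx h) rfl
  simp [haar, hx, hR, Set.indicator_of_mem, Set.indicator_of_notMem]

lemma haar_val_right (p : DI) {x : ℝ} (hx : x ∈ p.right.set) :
    haar p x = -(Real.sqrt p.len)⁻¹ := by
  have hL : x ∉ p.left.set := fun h => (p.left_right_disjoint.ne_of_mem h hx) rfl
  simp [haar, hx, hL, Set.indicator_of_mem, Set.indicator_of_notMem]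

lemma haar_val_zero (p : DI) {x : ℝ} (hx : x ∉ p.set) : haar p x = 0 := by
  have hL : x ∉ p.left.set := fun h => hx (p.left_subset h)
  have hR : x ∉ p.right.set := fun h => hx (p.right_subset h)
  simp [haar, hL, hR, Set.indicator_of_notMem]

lemma key_step (f : ℝ → ℝ) (hf : IntegrableOn f I01) {x : ℝ} (hx : x ∈ Set.Ico (0:ℝ) 1)
    (j : ℕ) :
    inn f (haar (ch x j)) * haar (ch x j) x = avg f (ch x (j+1)) - avg f (ch x j) := by
  set p := ch x j with hp
  have hxp : x ∈ p.set := ch_mem x j hx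
  have hl : (0:ℝ) < p.len := p.len_pos
  have hsq : (Real.sqrt p.len)⁻¹ * (Real.sqrt p.len)⁻¹ = p.len⁻¹ := by
    rw [← mul_inv, Real.mul_self_sqrt (le_of_lt hl)]
  have hIL := integral_split f hf p
  have hLlen : p.left.len = p.len / 2 := p.len_left
  have hRlen : p.right.len = p.len / 2 := p.len_right
  have hxLR : x ∈ p.left.set ∪ p.right.set := by rw [p.left_union_right]; exact hxp
  rw [inn_haar f hf p]
  cases hxLR with
  | inl hL =>
    have hch : ch x (j+1) = p.left := (eq_ch_of_mem hx hL).symm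
    rw [haar_val_left p hL, hch]
    unfold avg
    rw [hIL, hLlen]
    field_simp
    rw [Real.sq_sqrt (le_of_lt hl)]
    ring
  | inr hR =>
    have hch : ch x (j+1) = p.right := (eq_ch_of_mem hx hR).symm
    rw [haar_val_right p hR, hch]
    unfold avg
    rw [hIL, hRlen]
    field_simp
    rw [Real.sq_sqrt (le_of_lt hl)]
    ring

end Aux2
section Aux3
open MeasureTheory

/-- dyadic interval from level and raw index -/
def di (j k : ℕ) : DI := ⟨j, k % 2 ^ j, Nat.mod_lt _ (Nat.pow_pos (by norm_num))⟩

lemma di_j (j k : ℕ) : (di j k).j = j := rfl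

lemma di_k {j k : ℕ} (hk : k < 2 ^ j) : (di j k).k = k := Nat.mod_eq_of_lt hk

lemma DI.disjoint_of_ne {p q : DI} (hj : p.j = q.j) (h : p ≠ q) : Disjoint p.set q.set := by
  rw [Set.disjoint_left]
  intro x hxp hxq
  exact h (((eq_ch_of_mem (p.set_subset_Ico hxp) hxp)).trans
    (by rw [hj]; exact (eq_ch_of_mem (q.set_subset_Ico hxq) hxq).symm))

lemma DI.ext' {p q : DI} (hj : p.j = q.j) (hk : p.k = q.k) : p = q := by
  cases p; cases q
  simp only at hj hk
  subst hj; subst hk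
  rfl

lemma di_ch (x : ℝ) (j : ℕ) : di j (ch x j).k = ch x j :=
  DI.ext' rfl (di_k (ch x j).hk)

/-- level-j piecewise-average function -/
def Gj (f : ℝ → ℝ) (j : ℕ) : ℝ → ℝ := fun x =>
  ∑ k ∈ Finset.range (2 ^ j), Set.indicator (di j k).set (fun _ => avg f (di j k)) x

lemma Gj_measurable (f : ℝ → ℝ) (j : ℕ) : Measurable (Gj f j) := by
  apply Finset.measurable_sum
  intro k _
  exact Measurable.indicator measurable_const (di j k).measurableSet_set

lemma Gj_eq (f : ℝ → ℝ) (j : ℕ) {x : ℝ} (hx : x ∈ Set.Ico (0:ℝ) 1) :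
    Gj f j x = avg f (ch x j) := by
  unfold Gj
  have hmem : (ch x j).k ∈ Finset.range (2 ^ j) := Finset.mem_range.mpr (ch x j).hk
  rw [Finset.sum_eq_single_of_mem ((ch x j).k) hmem ?side]
  · rw [di_ch, Set.indicator_of_mem (ch_mem x j hx)]
  case side =>
    intro b hb hne
    apply Set.indicator_of_notMem
    intro hxb
    have : di j b = ch x j := eq_ch_of_mem hx hxb
    apply hne
    have : (di j b).k = (ch x j).k := by rw [this]
    rwa [di_k (Finset.mem_range.mp hb)] at this

lemma avg_abs_le (f : ℝ → ℝ) (hf : IntegrableOn f I01) (q : DI) :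
    (‖avg f q‖₊ : ℝ≥0∞) * ENNReal.ofReal q.len ≤ ∫⁻ x in q.set, ‖f x‖₊ ∂(MeasureTheory.volume) := by
  have hqs : q.set ⊆ I01 := (q.set_subset_Ico).trans Ico_subset_I01
  have hfi : IntegrableOn f q.set := hf.mono_set hqs
  have h1 : ‖avg f q‖ * q.len ≤ ∫ x in q.set, ‖f x‖ := by
    unfold avg
    rw [norm_mul]
    have hl := q.len_pos
    have : ‖(1:ℝ) / q.len‖ = 1 / q.len := by
      rw [Real.norm_eq_abs, abs_of_pos (by positivity)]
    rw [this]
    calc 1 / q.len * ‖∫ x in q.set, f x‖ * q.len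
        ≤ 1 / q.len * (∫ x in q.set, ‖f x‖) * q.len := by
          gcongr; exact norm_integral_le_integral_norm f
      _ = ∫ x in q.set, ‖f x‖ := by field_simp
  calc (‖avg f q‖₊ : ℝ≥0∞) * ENNReal.ofReal q.len
      = ENNReal.ofReal (‖avg f q‖ * q.len) := by
        rw [ENNReal.ofReal_mul (norm_nonneg _), ofReal_norm_eq_enorm]; rfl
    _ ≤ ENNReal.ofReal (∫ x in q.set, ‖f x‖) := ENNReal.ofReal_le_ofReal h1
    _ = ∫⁻ x in q.set, ‖f x‖₊ ∂(MeasureTheory.volume) := by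
        rw [MeasureTheory.ofReal_integral_norm_eq_lintegral_enorm hfi]; rfl

lemma lintegral_Gj_le (f : ℝ → ℝ) (hf : IntegrableOn f I01) (j : ℕ) :
    (∫⁻ x in Set.Ico (0:ℝ) 1, ‖Gj f j x‖₊ ∂(MeasureTheory.volume))
      ≤ ∫⁻ x in I01, ‖f x‖₊ ∂(MeasureTheory.volume) := by
  have step1 : ∀ x, (‖Gj f j x‖₊ : ℝ≥0∞) ≤
      ∑ k ∈ Finset.range (2 ^ j),
        (Set.indicator (di j k).set (fun _ => (‖avg f (di j k)‖₊ : ℝ≥0∞)) x) := by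
    intro x
    unfold Gj
    calc (‖∑ k ∈ Finset.range (2 ^ j),
          Set.indicator (di j k).set (fun _ => avg f (di j k)) x‖₊ : ℝ≥0∞)
        ≤ ∑ k ∈ Finset.range (2 ^ j),
            (‖Set.indicator (di j k).set (fun _ => avg f (di j k)) x‖₊ : ℝ≥0∞) := by
          exact_mod_cast nnnorm_sum_le _ _
      _ = _ := by
          apply Finset.sum_congr rfl
          intro k _
          by_cases hxk : x ∈ (di j k).set <;>
            simp [Set.indicator_of_mem, Set.indicator_of_notMem, hxk]
  calc (∫⁻ x in Set.Ico (0:ℝ) 1, ‖Gj f j x‖₊ ∂(MeasureTheory.volume))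
      ≤ ∫⁻ x in Set.Ico (0:ℝ) 1, ∑ k ∈ Finset.range (2 ^ j),
          (Set.indicator (di j k).set (fun _ => (‖avg f (di j k)‖₊ : ℝ≥0∞)) x)
            ∂(MeasureTheory.volume) := MeasureTheory.lintegral_mono step1
    _ = ∑ k ∈ Finset.range (2 ^ j), ∫⁻ x in Set.Ico (0:ℝ) 1,
          Set.indicator (di j k).set (fun _ => (‖avg f (di j k)‖₊ : ℝ≥0∞)) x
            ∂(MeasureTheory.volume) := by
        apply MeasureTheory.lintegral_finset_sum
        intro k _
        exact Measurable.indicator measurable_const (di j k).measurableSet_set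
    _ ≤ ∑ k ∈ Finset.range (2 ^ j), ∫⁻ x in (di j k).set, ‖f x‖₊ ∂(MeasureTheory.volume) := by
        apply Finset.sum_le_sum
        intro k _
        rw [MeasureTheory.lintegral_indicator (di j k).measurableSet_set,
          MeasureTheory.Measure.restrict_restrict (di j k).measurableSet_set,
          Set.inter_eq_self_of_subset_left (di j k).set_subset_Ico,
          MeasureTheory.lintegral_const, MeasureTheory.Measure.restrict_apply_univ,
          (di j k).volume_set]
        exact avg_abs_le f hf (di j k)
    _ = ∫⁻ x in ⋃ k ∈ Finset.range (2 ^ j), (di j k).set, ‖f x‖₊ ∂(MeasureTheory.volume) := by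
        rw [MeasureTheory.lintegral_biUnion_finset ?_ (fun k _ => (di j k).measurableSet_set)]
        intro a ha b hb hab
        show Disjoint (di j a).set (di j b).set
        apply DI.disjoint_of_ne (p := di j a) (q := di j b) rfl
        intro h
        apply hab
        have : (di j a).k = (di j b).k := by rw [h]
        rwa [di_k (Finset.mem_range.mp ha), di_k (Finset.mem_range.mp hb)] at this
    _ ≤ ∫⁻ x in I01, ‖f x‖₊ ∂(MeasureTheory.volume) := by
        apply MeasureTheory.lintegral_mono_set
        apply Set.iUnion₂_subset
        intro k _
        exact ((di j k).set_subset_Ico).trans Ico_subset_I01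

end Aux3
section Aux4
open MeasureTheory

lemma pow_len_eq (s : ℝ) (j : ℕ) : ((1:ℝ)/2^j) ^ s = ((2:ℝ)^(-s))^j := by
  have h1 : ((1:ℝ)/2^j) = (2:ℝ) ^ (-(j:ℝ)) := by
    rw [Real.rpow_neg (by norm_num), Real.rpow_natCast, one_div]
  rw [h1, ← Real.rpow_natCast ((2:ℝ)^(-s)) j,
    ← Real.rpow_mul (by norm_num), ← Real.rpow_mul (by norm_num)]
  congr 1
  ring

lemma geom_lt_one {s : ℝ} (hs : 0 < s) : (2:ℝ)^(-s) < 1 :=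
  Real.rpow_lt_one_of_one_lt_of_neg (by norm_num) (by linarith)

lemma geom_nonneg (s : ℝ) : 0 ≤ (2:ℝ)^(-s) := Real.rpow_nonneg (by norm_num) _

lemma ae_summable (s : ℝ) (hs : 0 < s) (f : ℝ → ℝ) (hf : IntegrableOn f I01) :
    ∀ᵐ x ∂(MeasureTheory.volume.restrict (Set.Ico (0:ℝ) 1)),
      Summable (fun j : ℕ => ((2:ℝ)^(-s)) ^ j * |avg f (ch x j)|) := by
  set r : ℝ := (2:ℝ)^(-s) with hr
  set rr : ℝ≥0 := Real.toNNReal r with hrr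
  have hrrc : ((rr : ℝ)) = r := Real.coe_toNNReal _ (geom_nonneg s)
  have hrr1 : (rr : ℝ≥0∞) < 1 := by
    rw [← ENNReal.coe_one, ENNReal.coe_lt_coe, ← NNReal.coe_lt_coe, hrrc]
    exact geom_lt_one hs
  set F : ℕ → ℝ → ℝ≥0∞ := fun j x => (rr : ℝ≥0∞)^j * ‖Gj f j x‖₊ with hF
  have hFm : ∀ j, Measurable (F j) := fun j =>
    (((Gj_measurable f j).nnnorm).coe_nnreal_ennreal).const_mul _
  set C : ℝ≥0∞ := ∫⁻ x in I01, ‖f x‖₊ ∂(MeasureTheory.volume) with hC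
  have hCfin : C ≠ ⊤ := hf.2.ne
  have hint : (∫⁻ x in Set.Ico (0:ℝ) 1, ∑' j, F j x ∂(MeasureTheory.volume)) ≠ ⊤ := by
    rw [MeasureTheory.lintegral_tsum (fun j => (hFm j).aemeasurable)]
    have hle : ∑' j, (∫⁻ x in Set.Ico (0:ℝ) 1, F j x ∂(MeasureTheory.volume))
        ≤ ∑' j : ℕ, (rr : ℝ≥0∞)^j * C := by
      apply ENNReal.tsum_le_tsum
      intro j
      rw [hF]
      simp only
      rw [MeasureTheory.lintegral_const_mul _ ((Gj_measurable f j).nnnorm).coe_nnreal_ennreal]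
      exact mul_le_mul_right (lintegral_Gj_le f hf j) _
    refine ne_top_of_le_ne_top ?_ hle
    rw [ENNReal.tsum_mul_right, ENNReal.tsum_geometric]
    apply ENNReal.mul_ne_top ?_ hCfin
    rw [ENNReal.inv_ne_top]
    intro h0
    rw [tsub_eq_zero_iff_le] at h0
    exact absurd h0 (not_le.mpr hrr1)
  have hmeas : Measurable (fun x => ∑' j, F j x) := Measurable.ennreal_tsum hFm
  filter_upwards [MeasureTheory.ae_lt_top hmeas hint,
    MeasureTheory.ae_restrict_mem measurableSet_Ico] with x hx hxI
  have hne : ∑' j, ((rr^j * ‖Gj f j x‖₊ : ℝ≥0) : ℝ≥0∞) ≠ ⊤ := by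
    rw [← lt_top_iff_ne_top]
    have hco : ∀ j : ℕ, ((rr^j * ‖Gj f j x‖₊ : ℝ≥0) : ℝ≥0∞) = F j x := by
      intro j
      rw [hF]
      push_cast
      ring
    rw [tsum_congr hco]
    exact hx
  have hsum : Summable (fun j => (rr^j * ‖Gj f j x‖₊ : ℝ≥0)) :=
    ENNReal.tsum_coe_ne_top_iff_summable.mp hne
  have hsum2 : Summable (fun j => ((rr^j * ‖Gj f j x‖₊ : ℝ≥0) : ℝ)) :=
    NNReal.summable_coe.mpr hsum
  apply hsum2.congr
  intro j
  push_cast [hrrc]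
  rw [Gj_eq f j hxI, Real.norm_eq_abs]

lemma pointwise_id (s : ℝ) (hs : s ∈ Set.Ioo (0:ℝ) 1) (f : ℝ → ℝ) (hf : IntegrableOn f I01)
    {x : ℝ} (hx : x ∈ Set.Ico (0:ℝ) 1)
    (hsum : Summable (fun j : ℕ => ((2:ℝ)^(-s)) ^ j * |avg f (ch x j)|)) :
    Ts s f x = ((2:ℝ)^s - 1)⁻¹ *
      ((∑' p : DI, p.len ^ s * inn f (haar p) * haar p x)
        + (2:ℝ)^s * avg f DI.root * Set.indicator I01 (1:ℝ→ℝ) x) := by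
  set r : ℝ := (2:ℝ)^(-s) with hrdef
  set a : ℕ → ℝ := fun j => avg f (ch x j) with ha
  set c : ℕ → ℝ := fun j => r^j * a j with hc
  have hr0 : 0 ≤ r := geom_nonneg s
  have h2s : (2:ℝ)^s * r = 1 := by
    rw [hrdef, ← Real.rpow_add (by norm_num : (0:ℝ) < 2)]
    simp
  have hlen : ∀ j : ℕ, ((ch x j).len) ^ s = r ^ j := fun j => pow_len_eq s j
  -- summabilities
  have hSc : Summable c := by
    apply Summable.of_abs
    apply hsum.congr
    intro j
    rw [hc]
    simp only
    rw [abs_mul, abs_of_nonneg (pow_nonneg hr0 j)]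
  have hS1 : Summable (fun j => c (j+1)) := (summable_nat_add_iff 1).mpr hSc
  have hS2 : Summable (fun j => r^j * a (j+1)) := by
    apply (hS1.mul_left ((2:ℝ)^s)).congr
    intro j
    rw [hc]
    simp only
    rw [pow_succ]
    calc (2:ℝ)^s * (r^j * r * a (j+1)) = (2^s * r) * (r^j * a (j+1)) := by ring
      _ = r^j * a (j+1) := by rw [h2s]; ring
  -- Ts reduction
  have hTs : Ts s f x = ∑' j, c j := by
    unfold Ts
    rw [← Function.Injective.tsum_eq (ch_injective x)
      (f := fun p : DI => p.len ^ s * avg f p * Set.indicator p.set (1:ℝ→ℝ) x) ?hsupp]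
    · apply tsum_congr
      intro j
      rw [Set.indicator_of_mem (ch_mem x j hx), hlen j]
      simp [hc, ha]
    case hsupp =>
      intro p hp
      by_contra hxp
      apply hp
      have hmem : x ∉ p.set := fun hmem => hxp ⟨p.j, (eq_ch_of_mem hx hmem).symm⟩
      show p.len ^ s * avg f p * Set.indicator p.set (1:ℝ→ℝ) x = 0
      rw [Set.indicator_of_notMem hmem, mul_zero]
  -- Haar reduction
  have hH : (∑' p : DI, p.len ^ s * inn f (haar p) * haar p x)
      = ∑' j : ℕ, r^j * (a (j+1) - a j) := by
    rw [← Function.Injective.tsum_eq (ch_injective x)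
      (f := fun p : DI => p.len ^ s * inn f (haar p) * haar p x) ?hsupp2]
    · apply tsum_congr
      intro j
      rw [hlen j, mul_assoc, key_step f hf hx j]
    case hsupp2 =>
      intro p hp
      by_contra hxp
      apply hp
      have hmem : x ∉ p.set := fun hmem => hxp ⟨p.j, (eq_ch_of_mem hx hmem).symm⟩
      show p.len ^ s * inn f (haar p) * haar p x = 0
      rw [haar_val_zero p hmem, mul_zero]
  have hroot : avg f DI.root = a 0 := by rw [ha]; simp only; rw [ch_zero x]
  have hind : Set.indicator I01 (1:ℝ→ℝ) x = 1 := Set.indicator_of_mem (Ico_subset_I01 hx) 1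
  have h2s1 : (2:ℝ)^s - 1 ≠ 0 := by
    have : 1 < (2:ℝ)^s := Real.one_lt_rpow_iff_of_pos (by norm_num) |>.mpr (Or.inl ⟨by norm_num, hs.1⟩)
    linarith
  rw [hTs, hH, hroot, hind, mul_one, eq_inv_mul_iff_mul_eq₀ h2s1]
  have e1 : (∑' j : ℕ, r^j * (a (j+1) - a j)) = (∑' j : ℕ, r^j * a (j+1)) - ∑' j, c j := by
    rw [← Summable.tsum_sub hS2 hSc]
    apply tsum_congr
    intro j
    rw [hc]; simp only; ring
  have e2 : (∑' j : ℕ, r^j * a (j+1)) = (2:ℝ)^s * ∑' j, c (j+1) := by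
    rw [← tsum_mul_left]
    apply tsum_congr
    intro j
    rw [hc]
    simp only
    rw [pow_succ]
    calc r^j * a (j+1) = (2^s * r) * (r^j * a (j+1)) := by rw [h2s]; ring
      _ = (2:ℝ)^s * (r^j * r * a (j+1)) := by ring
  have e3 : (∑' j : ℕ, c (j+1)) = (∑' j, c j) - c 0 := by
    have := Summable.tsum_eq_zero_add hSc
    linarith
  have hc0 : c 0 = a 0 := by rw [hc]; simp
  rw [e1, e2, e3, hc0]
  ring

end Aux4


/-- For `s ∈ (0,1)` and `f ∈ L²([0,1])`, the Haar expansion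
`T^s f = (2^s − 1)⁻¹ (Σ_I |I|^s (f,h_I) h_I + 2^s ⟨f⟩_{[0,1]} 𝟙_{[0,1]})` holds as elements
of `L²([0,1])`. -/
theorem Ts_haar_expansion (s : ℝ) (hs : s ∈ Set.Ioo (0 : ℝ) 1) (f : ℝ → ℝ) (hf : MemL2 f) :
    ∀ᵐ x ∂(volume.restrict I01),
      Ts s f x = ((2 : ℝ) ^ s - 1)⁻¹ *
        ((∑' p : DI, p.len ^ s * inn f (haar p) * haar p x)
          + (2 : ℝ) ^ s * avg f DI.root * Set.indicator I01 (1 : ℝ → ℝ) x) := by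
  haveI : MeasureTheory.IsFiniteMeasure (MeasureTheory.volume.restrict I01) := by
    unfold I01; infer_instance
  have hfint : IntegrableOn f I01 := MeasureTheory.MemLp.integrable one_le_two hf
  have hrestr : MeasureTheory.volume.restrict I01
      = MeasureTheory.volume.restrict (Set.Ico (0:ℝ) 1) := by
    apply (MeasureTheory.Measure.restrict_congr_set ?_).symm
    exact MeasureTheory.Ico_ae_eq_Icc
  rw [hrestr]
  filter_upwards [ae_summable s hs.1 f hfint,
    MeasureTheory.ae_restrict_mem measurableSet_Ico] with x hsum hxI
  exact pointwise_id s hs f hfint hxI hsum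
end
end

section
/- Let s ∈ (0,1). There exists a constant C > 0 depending only on s such that every b ∈ BMO^s belongs to dyadic BMO with ‖b‖_{BMO} ≤ C ‖b‖_{BMO^s}. Moreover, every b ∈ CMO^s belongs to dyadic CMO. -/
open MeasureTheory Filter
open scoped ENNReal NNReal

noncomputable section

/-- The squared dyadic BMO norm `‖b‖_{BMO}² = sup_I |I|⁻¹ Σ_{J ⊆ I} (b,h_J)²`. -/
def bmoDSq (b : ℝ → ℝ) : ℝ≥0∞ :=
  ⨆ p : DI,
    (∑' J : {J : DI // J.set ⊆ p.set}, ENNReal.ofReal ((inn b (haar J)) ^ 2)) /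
      ENNReal.ofReal p.len

/-- The truncated dyadic BMO quantity appearing in the definition of dyadic CMO. -/
def cmoDTrunc (b : ℝ → ℝ) (N : ℕ) : ℝ≥0∞ :=
  ⨆ p : DI,
    (∑' J : {J : DI // J.set ⊆ p.set ∧ J.len < 1 / 2 ^ N},
        ENNReal.ofReal ((inn b (haar J)) ^ 2)) / ENNReal.ofReal p.len

section Helpers

namespace DI

lemma len_pos_s12 (p : DI) : 0 < p.len := by
  rw [DI.len]; positivity

lemma len_nonneg (p : DI) : 0 ≤ p.len := p.len_pos_s12.le

lemma len_le_one (p : DI) : p.len ≤ 1 := by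
  rw [DI.len, div_le_one (by positivity)]
  exact one_le_pow₀ (by norm_num)

lemma measurableSet_set_s12 (p : DI) : MeasurableSet p.set := measurableSet_Ico

lemma set_subset_I01 (p : DI) : p.set ⊆ I01 := by
  intro x hx
  obtain ⟨h1, h2⟩ := hx
  constructor
  · exact le_trans (by positivity) h1
  · refine le_trans h2.le ?_
    rw [div_le_one (by positivity)]
    exact_mod_cast Nat.succ_le_of_lt p.hk

lemma volume_set_s12 (p : DI) : volume p.set = ENNReal.ofReal p.len := by
  rw [DI.set, Real.volume_Ico, DI.len]
  congr 1
  ring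

lemma left_set (p : DI) :
    p.left.set = Set.Ico ((p.k : ℝ) / 2 ^ p.j) (((p.k : ℝ) + 1/2) / 2 ^ p.j) := by
  rw [DI.left, DI.set]
  congr 1 <;> push_cast <;> · rw [pow_succ]; ring

lemma right_set (p : DI) :
    p.right.set = Set.Ico (((p.k : ℝ) + 1/2) / 2 ^ p.j) (((p.k : ℝ) + 1) / 2 ^ p.j) := by
  rw [DI.right, DI.set]
  congr 1 <;> push_cast <;> · rw [pow_succ]; ring

lemma union_children (p : DI) : p.left.set ∪ p.right.set = p.set := by
  rw [left_set, right_set, DI.set]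
  refine Set.Ico_union_Ico_eq_Ico ?_ ?_ <;>
    · apply div_le_div_of_nonneg_right _ (by positivity)
      linarith

lemma disjoint_children (p : DI) : Disjoint p.left.set p.right.set := by
  rw [left_set, right_set, Set.Ico_disjoint_Ico]
  simp

lemma left_subset_s12 (p : DI) : p.left.set ⊆ p.set := by
  rw [← p.union_children]; exact Set.subset_union_left

lemma right_subset_s12 (p : DI) : p.right.set ⊆ p.set := by
  rw [← p.union_children]; exact Set.subset_union_right

lemma subset_or_disjoint (p q : DI) (h : p.j ≤ q.j) :
    q.set ⊆ p.set ∨ Disjoint p.set q.set := by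
  set d := q.j - p.j with hd
  have h2 : (2:ℝ) ^ q.j = 2 ^ p.j * 2 ^ d := by
    rw [← pow_add]; congr 1; omega
  by_cases hcase : p.k * 2 ^ d ≤ q.k ∧ q.k + 1 ≤ (p.k + 1) * 2 ^ d
  · left
    rw [DI.set, DI.set]
    apply Set.Ico_subset_Ico
    · rw [div_le_div_iff₀ (by positivity) (by positivity), h2]
      have : ((p.k : ℝ) * 2 ^ d) ≤ q.k := by exact_mod_cast hcase.1
      calc (p.k:ℝ) * (2 ^ p.j * 2 ^ d) = (p.k * 2^d) * 2 ^ p.j := by ring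
        _ ≤ (q.k:ℝ) * 2 ^ p.j := by nlinarith [pow_pos (show (0:ℝ) < 2 by norm_num) p.j]
    · rw [div_le_div_iff₀ (by positivity) (by positivity), h2]
      have : ((q.k : ℝ) + 1) ≤ (p.k + 1) * 2 ^ d := by exact_mod_cast hcase.2
      calc ((q.k:ℝ) + 1) * 2 ^ p.j ≤ ((p.k:ℝ)+1) * 2^d * 2 ^ p.j := by
            nlinarith [pow_pos (show (0:ℝ) < 2 by norm_num) p.j]
        _ = ((p.k:ℝ)+1) * (2 ^ p.j * 2^d) := by ring
  · right
    rw [DI.set, DI.set, Set.Ico_disjoint_Ico]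
    rcases (not_and_or.mp hcase) with h1 | h1
    · push_neg at h1
      have h1' : q.k + 1 ≤ p.k * 2 ^ d := h1
      have : ((q.k : ℝ) + 1) / 2 ^ q.j ≤ (p.k : ℝ) / 2 ^ p.j := by
        rw [div_le_div_iff₀ (by positivity) (by positivity), h2]
        have : ((q.k : ℝ) + 1) ≤ p.k * 2 ^ d := by exact_mod_cast h1'
        calc ((q.k:ℝ) + 1) * 2 ^ p.j ≤ (p.k:ℝ) * 2^d * 2 ^ p.j := by
              nlinarith [pow_pos (show (0:ℝ) < 2 by norm_num) p.j]
          _ = (p.k:ℝ) * (2 ^ p.j * 2^d) := by ring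
      exact le_trans (inf_le_right) (le_trans this le_sup_left)
    · push_neg at h1
      have h1' : (p.k + 1) * 2 ^ d ≤ q.k := by omega
      have : ((p.k : ℝ) + 1) / 2 ^ p.j ≤ (q.k : ℝ) / 2 ^ q.j := by
        rw [div_le_div_iff₀ (by positivity) (by positivity), h2]
        have : ((p.k : ℝ) + 1) * 2 ^ d ≤ q.k := by exact_mod_cast h1'
        calc ((p.k:ℝ) + 1) * (2 ^ p.j * 2 ^ d) = ((p.k:ℝ)+1) * 2^d * 2^p.j := by ring
          _ ≤ (q.k:ℝ) * 2 ^ p.j := by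
              nlinarith [pow_pos (show (0:ℝ) < 2 by norm_num) p.j]
      exact le_trans (inf_le_left) (le_trans this le_sup_right)

end DI

end Helpers
section Integ

lemma integrable_ind (A : Set ℝ) (hA : MeasurableSet A) :
    MeasureTheory.Integrable (A.indicator (1 : ℝ → ℝ)) (volume.restrict I01) := by
  rw [MeasureTheory.integrable_indicator_iff hA]
  refine MeasureTheory.integrableOn_const (ne_of_lt ?_)
  calc (volume.restrict I01) A ≤ volume.restrict I01 Set.univ := measure_mono (Set.subset_univ _)
    _ = volume I01 := by simp [MeasureTheory.Measure.restrict_apply_univ]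
    _ < ⊤ := by rw [I01, Real.volume_Icc]; exact ENNReal.ofReal_lt_top

lemma integral_ind_one (A : Set ℝ) (hA : MeasurableSet A) (hsub : A ⊆ I01) :
    ∫ x in I01, A.indicator (1 : ℝ → ℝ) x = (volume A).toReal := by
  rw [MeasureTheory.setIntegral_indicator hA, Set.inter_eq_self_of_subset_right hsub]
  simp
  rfl

lemma inn_ind_haar (p q : DI) :
    inn (Set.indicator p.set 1) (haar q)
      = (Real.sqrt q.len)⁻¹ *
        ((volume (p.set ∩ q.left.set)).toReal - (volume (p.set ∩ q.right.set)).toReal) := by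
  have key : ∀ x : ℝ, Set.indicator p.set (1:ℝ→ℝ) x * haar q x
      = (Real.sqrt q.len)⁻¹ *
        (Set.indicator (p.set ∩ q.left.set) (1:ℝ→ℝ) x
          - Set.indicator (p.set ∩ q.right.set) (1:ℝ→ℝ) x) := by
    intro x
    rw [haar]
    have l1 := Set.inter_indicator_mul (s := p.set) (t := q.left.set) (1:ℝ→ℝ) (1:ℝ→ℝ) x
    have l2 := Set.inter_indicator_mul (s := p.set) (t := q.right.set) (1:ℝ→ℝ) (1:ℝ→ℝ) x
    simp only [Pi.one_apply, mul_one] at l1 l2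
    have e1 : Set.indicator (p.set ∩ q.left.set) (1:ℝ→ℝ) x
        = Set.indicator p.set (1:ℝ→ℝ) x * Set.indicator q.left.set (1:ℝ→ℝ) x := by
      rw [← l1]; rfl
    have e2 : Set.indicator (p.set ∩ q.right.set) (1:ℝ→ℝ) x
        = Set.indicator p.set (1:ℝ→ℝ) x * Set.indicator q.right.set (1:ℝ→ℝ) x := by
      rw [← l2]; rfl
    rw [e1, e2]; ring
  rw [inn]
  rw [MeasureTheory.integral_congr_ae (Filter.Eventually.of_forall key)]
  rw [MeasureTheory.integral_const_mul]
  congr 1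
  rw [MeasureTheory.integral_sub (integrable_ind _ ((p.measurableSet_set_s12).inter q.left.measurableSet_set_s12))
    (integrable_ind _ ((p.measurableSet_set_s12).inter q.right.measurableSet_set_s12))]
  rw [integral_ind_one _ ((p.measurableSet_set_s12).inter q.left.measurableSet_set_s12)
      (Set.Subset.trans Set.inter_subset_left p.set_subset_I01),
    integral_ind_one _ ((p.measurableSet_set_s12).inter q.right.measurableSet_set_s12)
      (Set.Subset.trans Set.inter_subset_left p.set_subset_I01)]

/-- Ancestor predicate. -/
def Anc (p q : DI) : Prop := p.set ⊆ q.set ∧ q.j < p.j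

lemma coeff_zero_of_not_anc (p q : DI) (h : ¬ Anc p q) :
    inn (Set.indicator p.set 1) (haar q) = 0 := by
  rw [inn_ind_haar]
  rcases le_or_gt p.j q.j with hj | hj
  · rcases DI.subset_or_disjoint p q hj with hsub | hdis
    · -- q.set ⊆ p.set : both children of q inside p
      have hl : p.set ∩ q.left.set = q.left.set :=
        Set.inter_eq_self_of_subset_right (q.left_subset_s12.trans hsub)
      have hr : p.set ∩ q.right.set = q.right.set :=
        Set.inter_eq_self_of_subset_right (q.right_subset_s12.trans hsub)
      rw [hl, hr, DI.volume_set_s12, DI.volume_set_s12]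
      have : q.left.len = q.right.len := rfl
      rw [this, sub_self, mul_zero]
    · have hl : p.set ∩ q.left.set = ∅ :=
        Set.disjoint_iff_inter_eq_empty.mp (hdis.mono_right q.left_subset_s12)
      have hr : p.set ∩ q.right.set = ∅ :=
        Set.disjoint_iff_inter_eq_empty.mp (hdis.mono_right q.right_subset_s12)
      rw [hl, hr]; simp
  · -- q.j < p.j ; since ¬Anc, p.set ⊄ q.set, so p disjoint from q hence from children
    have hnd : ¬ p.set ⊆ q.set := fun hc => h ⟨hc, hj⟩
    rcases DI.subset_or_disjoint q p hj.le with hsub | hdis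
    · exact absurd hsub hnd
    · have hl : p.set ∩ q.left.set = ∅ :=
        Set.disjoint_iff_inter_eq_empty.mp ((hdis.symm).mono_right q.left_subset_s12)
      have hr : p.set ∩ q.right.set = ∅ :=
        Set.disjoint_iff_inter_eq_empty.mp ((hdis.symm).mono_right q.right_subset_s12)
      rw [hl, hr]; simp

lemma DI.left_mem (p : DI) : (p.k : ℝ) / 2 ^ p.j ∈ p.set := by
  rw [DI.set]
  refine ⟨le_refl _, by gcongr; linarith⟩

lemma coeff_sq_of_anc (p q : DI) (h : Anc p q) :
    (inn (Set.indicator p.set 1) (haar q)) ^ 2 = p.len ^ 2 / q.len := by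
  obtain ⟨hsub, hj⟩ := h
  have hjl : q.left.j ≤ p.j := by show q.j + 1 ≤ p.j; omega
  have hjr : q.right.j ≤ p.j := by show q.j + 1 ≤ p.j; omega
  have hq : 0 < q.len := q.len_pos_s12
  have main : ((volume (p.set ∩ q.left.set)).toReal - (volume (p.set ∩ q.right.set)).toReal) ^ 2
      = p.len ^ 2 := by
    rcases DI.subset_or_disjoint q.left p hjl with hsubl | hdisl
    · have hl : p.set ∩ q.left.set = p.set := Set.inter_eq_self_of_subset_left hsubl
      have hr : p.set ∩ q.right.set = ∅ :=
        Set.disjoint_iff_inter_eq_empty.mp (q.disjoint_children.mono_left hsubl)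
      rw [hl, hr, DI.volume_set_s12]
      simp [ENNReal.toReal_ofReal p.len_nonneg]
    · rcases DI.subset_or_disjoint q.right p hjr with hsubr | hdisr
      · have hr : p.set ∩ q.right.set = p.set := Set.inter_eq_self_of_subset_left hsubr
        have hl : p.set ∩ q.left.set = ∅ :=
          Set.disjoint_iff_inter_eq_empty.mp (q.disjoint_children.symm.mono_left hsubr)
        rw [hl, hr, DI.volume_set_s12]
        simp [ENNReal.toReal_ofReal p.len_nonneg]
      · exfalso
        have hx : (p.k : ℝ) / 2 ^ p.j ∈ p.set := p.left_mem
        have hxq : (p.k : ℝ) / 2 ^ p.j ∈ q.set := hsub hx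
        rw [← q.union_children] at hxq
        rcases hxq with hxl | hxr
        · exact Set.disjoint_left.mp hdisl hxl hx
        · exact Set.disjoint_left.mp hdisr hxr hx
  rw [inn_ind_haar, mul_pow, main]
  rw [inv_pow, Real.sq_sqrt q.len_nonneg]
  rw [div_eq_mul_inv, mul_comm]

end Integ
section Anc

lemma DI.ext'_s12 {a b : DI} (h1 : a.j = b.j) (h2 : a.k = b.k) : a = b := by
  cases a; cases b; simp_all

/-- The ancestor of `p` at level `j`. -/
def ancAt (p : DI) (j : ℕ) : DI :=
  ⟨j, p.k / 2 ^ (p.j - j), by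
    rcases le_or_gt j p.j with h | h
    · rw [Nat.div_lt_iff_lt_mul (Nat.pow_pos (by norm_num))]
      calc p.k < 2 ^ p.j := p.hk
        _ = 2 ^ j * 2 ^ (p.j - j) := by rw [← pow_add]; congr 1; omega
    · have : p.j - j = 0 := by omega
      rw [this, pow_zero, Nat.div_one]
      exact lt_of_lt_of_le p.hk (Nat.pow_le_pow_right (by norm_num) h.le)⟩

lemma ancAt_len (p : DI) (j : ℕ) : (ancAt p j).len = 1 / 2 ^ j := rfl

lemma eq_ancAt_of_anc (p q : DI) (h : Anc p q) : q = ancAt p q.j := by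
  obtain ⟨hsub, hj⟩ := h
  refine DI.ext'_s12 rfl ?_
  show q.k = p.k / 2 ^ (p.j - q.j)
  set d := p.j - q.j with hd
  have h2 : (2:ℝ) ^ p.j = 2 ^ q.j * 2 ^ d := by rw [← pow_add]; congr 1; omega
  have hx : (p.k : ℝ) / 2 ^ p.j ∈ q.set := hsub p.left_mem
  rw [DI.set] at hx
  obtain ⟨hx1, hx2⟩ := hx
  have hlo : q.k * 2 ^ d ≤ p.k := by
    have : ((q.k : ℝ) * 2 ^ d) ≤ p.k := by
      rw [div_le_div_iff₀ (by positivity) (by positivity)] at hx1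
      rw [h2] at hx1
      nlinarith [pow_pos (show (0:ℝ) < 2 by norm_num) q.j]
    exact_mod_cast this
  have hhi : p.k < (q.k + 1) * 2 ^ d := by
    have : (p.k : ℝ) < ((q.k : ℝ) + 1) * 2 ^ d := by
      rw [div_lt_div_iff₀ (by positivity) (by positivity)] at hx2
      rw [h2] at hx2
      nlinarith [pow_pos (show (0:ℝ) < 2 by norm_num) q.j]
    exact_mod_cast this
  exact (Nat.div_eq_of_lt_le hlo hhi).symm

lemma rpow_calc (j : ℕ) (s c : ℝ) :
    ((1:ℝ)/2^j) ^ (-(2*s)) * (c / ((1:ℝ)/2^j)) = c * ((2:ℝ) ^ (2*s+1 : ℝ)) ^ j := by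
  have e1 : ((1:ℝ)/2^j) = (2:ℝ) ^ (-(j:ℝ)) := by
    rw [Real.rpow_neg (by norm_num), Real.rpow_natCast, one_div]
  rw [e1, ← Real.rpow_natCast ((2:ℝ) ^ (2*s+1:ℝ)) j, ← Real.rpow_mul (by norm_num),
    ← Real.rpow_mul (by norm_num), Real.rpow_neg (by norm_num) (j:ℝ), div_inv_eq_mul]
  rw [show c * (2:ℝ) ^ (j:ℝ) = (2:ℝ)^(j:ℝ) * c from mul_comm _ _, ← mul_assoc,
    ← Real.rpow_add (by norm_num), mul_comm _ c]
  congr 2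
  ring

end Anc
section Capa

lemma hdot_bound (s : ℝ) (hs : 0 < s) (p : DI) :
    hdotSq s (Set.indicator p.set 1)
      ≤ ENNReal.ofReal (p.len ^ ((1:ℝ) - 2*s) / ((2:ℝ)^(2*s+1:ℝ) - 1)) := by
  classical
  set r := (2:ℝ)^(2*s+1:ℝ) with hr
  have hr1 : 1 < r := by
    rw [hr, Real.one_lt_rpow_iff (by norm_num)]
    exact Or.inl ⟨by norm_num, by linarith⟩
  set F := (Finset.range p.j).image (ancAt p) with hF
  rw [hdotSq, tsum_eq_sum (s := F) (by
    intro q hq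
    have hnot : ¬ Anc p q := by
      intro hA
      exact hq (hF ▸ Finset.mem_image.2
        ⟨q.j, Finset.mem_range.2 hA.2, (eq_ancAt_of_anc p q hA).symm⟩)
    rw [coeff_zero_of_not_anc p q hnot]
    simp)]
  rw [hF, Finset.sum_image (by intro x _ y _ hxy; exact congrArg DI.j hxy)]
  have hterm : ∀ j ∈ Finset.range p.j,
      ENNReal.ofReal ((ancAt p j).len ^ (-(2*s))
          * inn (Set.indicator p.set 1) (haar (ancAt p j)) ^ 2)
        ≤ ENNReal.ofReal (p.len ^ 2 * r ^ j) := by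
    intro j hj
    by_cases hA : Anc p (ancAt p j)
    · rw [coeff_sq_of_anc p _ hA, ancAt_len, rpow_calc j s (p.len^2), hr]
    · rw [coeff_zero_of_not_anc p _ hA]
      simp
  refine le_trans (Finset.sum_le_sum hterm) ?_
  rw [← ENNReal.ofReal_sum_of_nonneg (by
    intro i _
    have : (0:ℝ) < r := by linarith
    positivity)]
  apply ENNReal.ofReal_le_ofReal
  rw [← Finset.mul_sum, geom_sum_eq (ne_of_gt hr1)]
  have hrpos : (0:ℝ) < r - 1 := by linarith
  have key : p.len^2 * r ^ p.j = p.len ^ ((1:ℝ) - 2*s) := by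
    have hl : p.len = (2:ℝ)^(-(p.j:ℝ)) := by
      rw [DI.len, Real.rpow_neg (by norm_num), Real.rpow_natCast, one_div]
    rw [hl, hr, ← Real.rpow_natCast ((2:ℝ)^(-(p.j:ℝ))) 2,
      ← Real.rpow_natCast ((2:ℝ)^((2*s+1:ℝ))) p.j,
      ← Real.rpow_mul (by norm_num), ← Real.rpow_mul (by norm_num),
      ← Real.rpow_mul (by norm_num), ← Real.rpow_add (by norm_num)]
    congr 1
    push_cast
    ring
  calc p.len^2 * ((r^p.j - 1)/(r-1))
      ≤ p.len^2 * (r^p.j/(r-1)) := by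
        gcongr
        · linarith
    _ = (p.len^2 * r^p.j)/(r-1) := by ring
    _ = p.len^((1:ℝ)-2*s)/(r-1) := by rw [key]

lemma memL2_ind (p : DI) : MemL2 (Set.indicator p.set (1 : ℝ → ℝ)) := by
  rw [MemL2]
  have : volume.restrict I01 p.set ≠ ⊤ := by
    refine ne_of_lt (lt_of_le_of_lt (MeasureTheory.Measure.restrict_le_self _) ?_)
    rw [p.volume_set_s12]
    exact ENNReal.ofReal_lt_top
  exact MeasureTheory.memLp_indicator_const 2 p.measurableSet_set_s12 1 (Or.inr this)

lemma l2_ind (p : DI) : ∫ x in I01, (Set.indicator p.set (1:ℝ→ℝ) x) ^ 2 = p.len := by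
  have hpt : ∀ x, (Set.indicator p.set (1:ℝ→ℝ) x) ^ 2 = Set.indicator p.set (1:ℝ→ℝ) x := by
    intro x
    by_cases h : x ∈ p.set <;> simp [h]
  rw [MeasureTheory.integral_congr_ae (Filter.Eventually.of_forall hpt),
    integral_ind_one _ p.measurableSet_set_s12 p.set_subset_I01, p.volume_set_s12,
    ENNReal.toReal_ofReal p.len_nonneg]

lemma capa_le (s : ℝ) (hs : s ∈ Set.Ioo (0:ℝ) 1) (p : DI) :
    capa s p.set
      ≤ ENNReal.ofReal ((1/((2:ℝ)^(2*s+1:ℝ) - 1) + 1) * p.len ^ ((1:ℝ) - 2*s)) := by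
  set r := (2:ℝ)^(2*s+1:ℝ) with hr
  have hr1 : 1 < r := by
    rw [hr, Real.one_lt_rpow_iff (by norm_num)]
    exact Or.inl ⟨by norm_num, by linarith [hs.1]⟩
  set f := Set.indicator p.set (1:ℝ→ℝ) with hf
  have hlen : p.len ≤ p.len ^ ((1:ℝ) - 2*s) := by
    have := Real.rpow_le_rpow_of_exponent_ge p.len_pos_s12 p.len_le_one
      (show (1:ℝ) - 2*s ≤ 1 by linarith [hs.1])
    rwa [Real.rpow_one] at this
  have hnorm : hsNormSq s f ≤ ENNReal.ofReal ((1/(r - 1) + 1) * p.len ^ ((1:ℝ) - 2*s)) := by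
    rw [hsNormSq, l2_ind p]
    refine le_trans (add_le_add (hdot_bound s hs.1 p) le_rfl) ?_
    rw [← ENNReal.ofReal_add (div_nonneg (Real.rpow_nonneg p.len_nonneg _) (by linarith)) p.len_nonneg]
    apply ENNReal.ofReal_le_ofReal
    have : p.len ^ ((1:ℝ)-2*s) / (r-1) + p.len ^ ((1:ℝ)-2*s)
        = (1/(r-1) + 1) * p.len ^ ((1:ℝ)-2*s) := by ring
    linarith [this ▸ add_le_add (le_refl (p.len ^ ((1:ℝ)-2*s) / (r-1))) hlen]
  have hmem : MemHs s f := ⟨memL2_ind p, lt_of_le_of_lt hnorm ENNReal.ofReal_lt_top⟩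
  have hae : ∀ᵐ x ∂(volume.restrict p.set), 1 ≤ f x := by
    filter_upwards [MeasureTheory.self_mem_ae_restrict p.measurableSet_set_s12] with x hx
    rw [hf, Set.indicator_of_mem hx, Pi.one_apply]
  calc capa s p.set ≤ hsNormSq s f := by
        rw [capa]
        exact iInf_le_of_le f (iInf_le_of_le hmem (iInf_le_of_le hae le_rfl))
    _ ≤ _ := hnorm

end Capa
section Final

lemma key_ineq (s : ℝ) (hs : s ∈ Set.Ioo (0:ℝ) 1) (b : ℝ → ℝ) (p : DI) (P : DI → Prop)
    (hP : ∀ J : DI, P J → J.set ⊆ p.set) :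
    (∑' J : {J : DI // P J}, ENNReal.ofReal ((inn b (haar J)) ^ 2)) / ENNReal.ofReal p.len
      ≤ ENNReal.ofReal (1/((2:ℝ)^(2*s+1:ℝ) - 1) + 1)
        * ((∑' J : {J : DI // P J},
            ENNReal.ofReal ((J : DI).len ^ (-(2*s)) * (inn b (haar J)) ^ 2)) / capa s p.set) := by
  set r := (2:ℝ)^(2*s+1:ℝ) with hr
  have hr1 : 1 < r := by
    rw [hr, Real.one_lt_rpow_iff (by norm_num)]
    exact Or.inl ⟨by norm_num, by linarith [hs.1]⟩
  set K := 1/(r - 1) + 1 with hK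
  have hKpos : 0 < K := by
    rw [hK]
    have : 0 < 1/(r-1) := one_div_pos.mpr (by linarith)
    linarith
  set A := ∑' J : {J : DI // P J}, ENNReal.ofReal ((inn b (haar J)) ^ 2) with hA
  set A' := ∑' J : {J : DI // P J},
      ENNReal.ofReal ((J : DI).len ^ (-(2*s)) * (inn b (haar J)) ^ 2) with hA'
  have hplen2s : (0:ℝ) < p.len ^ (2*s) := Real.rpow_pos_of_pos p.len_pos_s12 _
  -- Step 1 : A ≤ ofReal (p.len ^ 2s) * A'
  have step1 : A ≤ ENNReal.ofReal (p.len ^ (2*s)) * A' := by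
    rw [hA, hA', ← ENNReal.tsum_mul_left]
    refine Summable.tsum_le_tsum (fun J => ?_) ENNReal.summable ENNReal.summable
    rw [← ENNReal.ofReal_mul (le_of_lt hplen2s)]
    apply ENNReal.ofReal_le_ofReal
    have hle : (J : DI).len ≤ p.len := by
      have hv := measure_mono (μ := (volume : MeasureTheory.Measure ℝ)) (hP J J.2)
      rw [(J : DI).volume_set_s12, p.volume_set_s12] at hv
      exact (ENNReal.ofReal_le_ofReal_iff p.len_nonneg).mp hv
    have h1 : p.len ^ (-(2*s)) ≤ (J : DI).len ^ (-(2*s)) := by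
      rw [Real.rpow_neg p.len_nonneg, Real.rpow_neg (J : DI).len_nonneg]
      exact inv_anti₀ (Real.rpow_pos_of_pos (J:DI).len_pos_s12 _)
        (Real.rpow_le_rpow (J:DI).len_nonneg hle (by linarith [hs.1]))
    have h2 : (1:ℝ) ≤ p.len ^ (2*s) * (J : DI).len ^ (-(2*s)) := by
      have : p.len ^ (2*s) * p.len ^ (-(2*s)) = 1 := by
        rw [← Real.rpow_add p.len_pos_s12]
        simp
      calc (1:ℝ) = p.len ^ (2*s) * p.len ^ (-(2*s)) := this.symm
        _ ≤ p.len ^ (2*s) * (J : DI).len ^ (-(2*s)) := by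
            exact mul_le_mul_of_nonneg_left h1 (le_of_lt hplen2s)
    calc (inn b (haar J)) ^ 2 = 1 * (inn b (haar J)) ^ 2 := (one_mul _).symm
      _ ≤ (p.len ^ (2*s) * (J:DI).len ^ (-(2*s))) * (inn b (haar J)) ^ 2 :=
          mul_le_mul_of_nonneg_right h2 (sq_nonneg _)
      _ = p.len ^ (2*s) * ((J:DI).len ^ (-(2*s)) * (inn b (haar J)) ^ 2) := by ring
  -- Step 2/3 : divide
  have hfact : ENNReal.ofReal p.len
      = ENNReal.ofReal (p.len ^ ((1:ℝ) - 2*s)) * ENNReal.ofReal (p.len ^ (2*s)) := by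
    rw [← ENNReal.ofReal_mul (Real.rpow_nonneg p.len_nonneg _), ← Real.rpow_add p.len_pos_s12]
    norm_num
  have step3 : ENNReal.ofReal (p.len ^ (2*s)) * A' / ENNReal.ofReal p.len
      = A' / ENNReal.ofReal (p.len ^ ((1:ℝ) - 2*s)) := by
    rw [hfact, mul_comm (ENNReal.ofReal (p.len ^ (2*s))) A']
    exact ENNReal.mul_div_mul_right A' _
      (by simp [ENNReal.ofReal_eq_zero, not_le, hplen2s]) ENNReal.ofReal_ne_top
  -- Step 4 : compare with capacity
  have hcapa := capa_le s hs p
  have step4 : A' / ENNReal.ofReal (p.len ^ ((1:ℝ) - 2*s))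
      ≤ ENNReal.ofReal K * (A' / capa s p.set) := by
    have e1 : A' / ENNReal.ofReal (p.len ^ ((1:ℝ) - 2*s))
        = ENNReal.ofReal K * A' / (ENNReal.ofReal K * ENNReal.ofReal (p.len ^ ((1:ℝ)-2*s))) := by
      rw [ENNReal.mul_div_mul_left A' _
        (by simp [ENNReal.ofReal_eq_zero, not_le, hKpos]) ENNReal.ofReal_ne_top]
    rw [e1, ← ENNReal.ofReal_mul (le_of_lt hKpos), mul_div_assoc]
    exact mul_le_mul_right (ENNReal.div_le_div_left hcapa A') _
  calc A / ENNReal.ofReal p.len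
      ≤ ENNReal.ofReal (p.len ^ (2*s)) * A' / ENNReal.ofReal p.len :=
        ENNReal.div_le_div_right step1 _
    _ = A' / ENNReal.ofReal (p.len ^ ((1:ℝ) - 2*s)) := step3
    _ ≤ ENNReal.ofReal K * (A' / capa s p.set) := step4

end Final
/-- For `s ∈ (0,1)` there is `C > 0` depending only on `s` such that
`BMO^s ⊆ BMO` with `‖b‖_{BMO} ≤ C‖b‖_{BMO^s}`; moreover `CMO^s ⊆ CMO`. -/
theorem BMOs_subset_BMO (s : ℝ) (hs : s ∈ Set.Ioo (0 : ℝ) 1) :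
    ∃ C : ℝ, 0 < C ∧ ∀ b : ℝ → ℝ, IntegrableOn b I01 →
      (MemBMOs s b →
        bmoDSq b ≠ ⊤ ∧ (bmoDSq b) ^ (1 / 2 : ℝ) ≤ ENNReal.ofReal C * bmoNorm s b) ∧
      (MemCMOs s b → bmoDSq b ≠ ⊤ ∧ Tendsto (cmoDTrunc b) atTop (nhds 0)) := by
  set r := (2:ℝ)^(2*s+1:ℝ) with hr
  have hr1 : 1 < r := by
    rw [hr, Real.one_lt_rpow_iff (by norm_num)]
    exact Or.inl ⟨by norm_num, by linarith [hs.1]⟩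
  set K := 1/(r - 1) + 1 with hK
  have hKpos : 0 < K := by
    have : 0 < 1/(r-1) := one_div_pos.mpr (by linarith)
    rw [hK]; linarith
  refine ⟨K ^ ((1:ℝ)/2), Real.rpow_pos_of_pos hKpos _, fun b hb => ?_⟩
  have hbmo : bmoDSq b ≤ ENNReal.ofReal K * bmoSq s b := by
    rw [bmoDSq]
    refine iSup_le fun p => ?_
    refine le_trans (key_ineq s hs b p (fun J => J.set ⊆ p.set) (fun J h => h)) ?_
    rw [← hr, ← hK]
    refine mul_le_mul_right ?_ _
    have hpair : ((({p} : Finset DI) : Set DI)).Pairwise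
        fun p q => Disjoint p.set q.set := by
      rw [Finset.coe_singleton]; exact Set.pairwise_singleton _ _
    have h := le_iSup₂ (f := fun (F : Finset DI)
        (_ : (F : Set DI).Pairwise fun p q => Disjoint p.set q.set) =>
        (∑ p' ∈ F, ∑' J : {J : DI // J.set ⊆ p'.set},
            ENNReal.ofReal ((J : DI).len ^ (-(2*s)) * (inn b (haar J)) ^ 2)) /
          capa s (⋃ p' ∈ F, p'.set)) ({p} : Finset DI) hpair
    rw [bmoSq]
    simpa using h
  have hcmo : ∀ N : ℕ, cmoDTrunc b N ≤ ENNReal.ofReal K * cmoTrunc s b N := by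
    intro N
    rw [cmoDTrunc]
    refine iSup_le fun p => ?_
    refine le_trans (key_ineq s hs b p
      (fun J => J.set ⊆ p.set ∧ J.len < 1 / 2 ^ N) (fun J h => h.1)) ?_
    rw [← hr, ← hK]
    refine mul_le_mul_right ?_ _
    have hpair : ((({p} : Finset DI) : Set DI)).Pairwise
        fun p q => Disjoint p.set q.set := by
      rw [Finset.coe_singleton]; exact Set.pairwise_singleton _ _
    have h := le_iSup₂ (f := fun (F : Finset DI)
        (_ : (F : Set DI).Pairwise fun p q => Disjoint p.set q.set) =>
        (∑ p' ∈ F, ∑' J : {J : DI // J.set ⊆ p'.set ∧ J.len < 1 / 2 ^ N},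
            ENNReal.ofReal ((J : DI).len ^ (-(2*s)) * (inn b (haar J)) ^ 2)) /
          capa s (⋃ p' ∈ F, p'.set)) ({p} : Finset DI) hpair
    rw [cmoTrunc]
    simpa using h
  constructor
  · intro hB
    have hne : bmoDSq b ≠ ⊤ :=
      ne_top_of_le_ne_top (ENNReal.mul_ne_top ENNReal.ofReal_ne_top hB) hbmo
    refine ⟨hne, ?_⟩
    have h2 := ENNReal.rpow_le_rpow hbmo (by norm_num : (0:ℝ) ≤ 1/2)
    rw [ENNReal.mul_rpow_of_nonneg _ _ (by norm_num : (0:ℝ) ≤ 1/2),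
      ENNReal.ofReal_rpow_of_pos hKpos] at h2
    rw [bmoNorm]
    exact h2
  · intro hC
    have hne : bmoDSq b ≠ ⊤ :=
      ne_top_of_le_ne_top (ENNReal.mul_ne_top ENNReal.ofReal_ne_top hC.1) hbmo
    refine ⟨hne, ?_⟩
    have h0 : Tendsto (fun N => ENNReal.ofReal K * cmoTrunc s b N) atTop (nhds 0) := by
      have := ENNReal.Tendsto.const_mul (a := ENNReal.ofReal K) hC.2
        (Or.inr ENNReal.ofReal_ne_top)
      simpa using this
    exact tendsto_of_tendsto_of_tendsto_of_le_of_le tendsto_const_nhds h0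
      (fun N => zero_le) hcmo
end
end
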